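/- arXiv:2105.09775 — 5 statements merged into one kernel-verified Lean document; each statement's English description precedes it below -/
import Mathlib

section
/- Let n, k be natural numbers with 1 ≤ k ≤ n, let A be an (n+1)×(n+1) complex matrix belonging to MD_{n,k}, and let m be a positive integer. Then A^m belongs to MD_{n,k}. -/
/-- `A` belongs to `MD_{n,k}`: `A i j = 0` whenever `|i - j|` is not a multiple of `k`. -/
def MD (n k : ℕ) (A : Matrix (Fin (n+1)) (Fin (n+1)) ℂ) : Prop :=
  ∀ i j : Fin (n+1), ¬ ((k : ℤ) ∣ (i : ℤ) - (j : ℤ)) → A i j = 0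

theorem MD.one (n k : ℕ) : MD n k 1 := by
  intro i j hij
  have hne : i ≠ j := by
    rintro rfl
    exact hij (by simp)
  exact Matrix.one_apply_ne hne

theorem MD.mul {n k : ℕ} {A B : Matrix (Fin (n+1)) (Fin (n+1)) ℂ}
    (hA : MD n k A) (hB : MD n k B) : MD n k (A * B) := by
  intro i j hij
  rw [Matrix.mul_apply]
  refine Finset.sum_eq_zero fun l _ => ?_
  by_cases hil : (k : ℤ) ∣ (i : ℤ) - (l : ℤ)
  · have hlj : ¬ (k : ℤ) ∣ (l : ℤ) - (j : ℤ) := fun hlj =>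
      hij (by simpa using dvd_add hil hlj)
    rw [hB l j hlj, mul_zero]
  · rw [hA i l hil, zero_mul]

theorem MD.pow {n k : ℕ} {A : Matrix (Fin (n+1)) (Fin (n+1)) ℂ} (hA : MD n k A) :
    ∀ m : ℕ, MD n k (A ^ m)
  | 0 => MD.one n k
  | m + 1 => (hA.pow m).mul hA

theorem stmt1_general (n k : ℕ)
    (A : Matrix (Fin (n+1)) (Fin (n+1)) ℂ) (hA : MD n k A)
    (m : ℕ) :
    MD n k (A ^ m) :=
  hA.pow m

theorem stmt1 (n k : ℕ) (hk : 1 ≤ k) (hkn : k ≤ n)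
    (A : Matrix (Fin (n+1)) (Fin (n+1)) ℂ) (hA : MD n k A)
    (m : ℕ) (hm : 1 ≤ m) :
    MD n k (A ^ m) :=
  stmt1_general n k A hA m
end

section
/- Let n, k be natural numbers with 1 ≤ k ≤ n, and let A be an invertible (n+1)×(n+1) complex matrix belonging to MD_{n,k}. Then the inverse matrix A⁻¹ also belongs to MD_{n,k}. -/
theorem Subalgebra.ringInverse_mem_of_finiteDimensional {K R : Type*} [Field K] [Ring R]
    [Algebra K R] (S : Subalgebra K R) [FiniteDimensional K S] {a : R} (ha : a ∈ S) :
    Ring.inverse a ∈ S := by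
  by_cases hu : IsUnit a
  · have : IsArtinianRing S := IsArtinianRing.of_finite K S
    have hS : IsUnit (⟨a, ha⟩ : S) := IsArtinianRing.isUnit_iff_isRightRegular.mpr
      fun x y h ↦ Subtype.ext (hu.isRegular.2 (congrArg Subtype.val h))
    have hunit : hu.unit = Units.map (S.val : S →* R) hS.unit := Units.ext rfl
    rw [Ring.inverse_of_isUnit hu, hunit, ← map_inv]
    exact Subtype.prop _
  · simp [Ring.inverse_non_unit a hu]

namespace MD

variable {n k : ℕ}

theorem mul_s2 {A B : Matrix (Fin (n+1)) (Fin (n+1)) ℂ} (hA : MD n k A) (hB : MD n k B) :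
    MD n k (A * B) := by
  intro i j h
  rw [Matrix.mul_apply]
  refine Finset.sum_eq_zero fun l _ ↦ ?_
  by_cases hil : (k : ℤ) ∣ (i : ℤ) - (l : ℤ)
  · have hlj : ¬ (k : ℤ) ∣ (l : ℤ) - (j : ℤ) := fun hlj ↦ h (by simpa using dvd_add hil hlj)
    simp [hB l j hlj]
  · simp [hA i l hil]

theorem add {A B : Matrix (Fin (n+1)) (Fin (n+1)) ℂ} (hA : MD n k A) (hB : MD n k B) :
    MD n k (A + B) := fun i j h ↦ by simp [hA i j h, hB i j h]

theorem algebraMap (c : ℂ) : MD n k (algebraMap ℂ _ c) := fun i j h ↦ by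
  rw [Algebra.algebraMap_eq_smul_one, Matrix.smul_apply, Matrix.one_apply_ne, smul_zero]
  rintro rfl
  simp at h

variable (n k) in
def subalgebra : Subalgebra ℂ (Matrix (Fin (n+1)) (Fin (n+1)) ℂ) where
  carrier := {A | MD n k A}
  mul_mem' := mul_s2
  add_mem' := add
  algebraMap_mem' := algebraMap

end MD

theorem stmt2_general (n k : ℕ)
    (A : Matrix (Fin (n+1)) (Fin (n+1)) ℂ)
    (hA : MD n k A) :
    MD n k A⁻¹ := by
  rw [Matrix.nonsing_inv_eq_ringInverse]
  exact (MD.subalgebra n k).ringInverse_mem_of_finiteDimensional hA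

theorem stmt2 (n k : ℕ) (hk : 1 ≤ k) (hkn : k ≤ n)
    (A : Matrix (Fin (n+1)) (Fin (n+1)) ℂ)
    (hA : MD n k A) (hU : IsUnit A) :
    MD n k A⁻¹ :=
  stmt2_general n k A hA
end

section
/- Let n, k be natural numbers with 1 ≤ k ≤ n, let A be an invertible (n+1)×(n+1) complex matrix belonging to MD_{n,k}, and let m be a positive integer. Then (A⁻¹)^m belongs to MD_{n,k}; that is, MD_{n,k} is closed under taking powers with negative exponents of its nonsingular elements. -/
theorem Subalgebra.ringInverse_mem {K A : Type*} [Field K] [Ring A] [Algebra K A]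
    [FiniteDimensional K A] (S : Subalgebra K A) {x : A} (hxS : x ∈ S) (hx : IsUnit x) :
    Ring.inverse x ∈ S := by
  have hinj : Function.Injective (LinearMap.mulLeft K (⟨x, hxS⟩ : S)) :=
    fun y z h ↦ Subtype.ext (hx.mul_left_cancel (congrArg Subtype.val h))
  obtain ⟨y, hy⟩ := LinearMap.injective_iff_surjective.mp hinj 1
  have hxy : x * y = 1 := congrArg Subtype.val hy
  convert y.2
  exact hx.mul_left_cancel (by rw [Ring.mul_inverse_cancel x hx, hxy])

namespace Matrix

variable (ι R : Type*) [Fintype ι] [DecidableEq ι] [CommSemiring R]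

def supportedOn (r : ι → ι → Prop) (refl : ∀ i, r i i)
    (trans : ∀ {i j l}, r i j → r j l → r i l) : Subalgebra R (Matrix ι ι R) where
  carrier := {A | ∀ i j, ¬ r i j → A i j = 0}
  mul_mem' {A B} hA hB i j hij := by
    rw [mul_apply]
    refine Finset.sum_eq_zero fun l _ ↦ ?_
    by_cases hil : r i l
    · rw [hB l j fun hlj ↦ hij (trans hil hlj), mul_zero]
    · rw [hA i l hil, zero_mul]
  add_mem' {A B} hA hB i j hij := by simp [hA i j hij, hB i j hij]
  algebraMap_mem' c i j hij := by
    simp [algebraMap_matrix_apply, show i ≠ j from fun h ↦ hij (h ▸ refl i)]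

end Matrix

def mdSubalgebra (n k : ℕ) : Subalgebra ℂ (Matrix (Fin (n+1)) (Fin (n+1)) ℂ) :=
  Matrix.supportedOn (Fin (n+1)) ℂ (fun i j ↦ (k : ℤ) ∣ (i : ℤ) - (j : ℤ))
    (fun _ ↦ by simp) (fun hij hjl ↦ by simpa using dvd_add hij hjl)

theorem mem_mdSubalgebra {n k : ℕ} {A : Matrix (Fin (n+1)) (Fin (n+1)) ℂ} :
    A ∈ mdSubalgebra n k ↔ MD n k A :=
  Iff.rfl

theorem stmt3_general (n k : ℕ)
    (A : Matrix (Fin (n+1)) (Fin (n+1)) ℂ)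
    (hA : MD n k A) (hU : IsUnit A)
    (m : ℕ) :
    MD n k (A⁻¹ ^ m) := by
  have hinv : A⁻¹ ∈ mdSubalgebra n k := by
    rw [Matrix.nonsing_inv_eq_ringInverse]
    exact (mdSubalgebra n k).ringInverse_mem (mem_mdSubalgebra.mpr hA) hU
  exact mem_mdSubalgebra.mp (pow_mem hinv m)

theorem stmt3 (n k : ℕ) (hk : 1 ≤ k) (hkn : k ≤ n)
    (A : Matrix (Fin (n+1)) (Fin (n+1)) ℂ)
    (hA : MD n k A) (hU : IsUnit A)
    (m : ℕ) (hm : 1 ≤ m) :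
    MD n k (A⁻¹ ^ m) :=
  stmt3_general n k A hA hU m
end

section
/- Let n, k be natural numbers with 1 ≤ k ≤ n, and let A be an invertible (n+1)×(n+1) complex k-tridiagonal matrix. Then the inverse matrix A⁻¹ belongs to MD_{n,k}; that is, (A⁻¹)_{ij} = 0 whenever |i−j| is not an integer multiple of k. -/
/-- `A` is `k`-tridiagonal: `A i j = 0` whenever `|i - j| ∉ {0, k}`. -/
def KTridiagonal (n k : ℕ) (A : Matrix (Fin (n+1)) (Fin (n+1)) ℂ) : Prop :=
  ∀ i j : Fin (n+1), |(i : ℤ) - (j : ℤ)| ≠ 0 → |(i : ℤ) - (j : ℤ)| ≠ k → A i j = 0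

/-!
Let `ω` be a primitive `k`-th root of unity and `D = diag(1, ω, ω², …, ωⁿ)`. A matrix commutes
with `D` exactly when its `(i, j)` entry vanishes whenever `ωⁱ ≠ ωʲ`, i.e. whenever `k ∤ i - j`;
so `MD_{n,k}` is the commutant of `D`. A `k`-tridiagonal matrix lies in it, and a commutant is
closed under taking inverses.
-/

open Matrix

theorem IsPrimitiveRoot.pow_eq_pow_iff_dvd_sub {M : Type*} [CommMonoid M] {ω : M} {k : ℕ}
    (hk : k ≠ 0) (hω : IsPrimitiveRoot ω k) (i j : ℕ) :
    ω ^ i = ω ^ j ↔ (k : ℤ) ∣ (i : ℤ) - j := by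
  rw [(hω.isOfFinOrder hk).pow_eq_pow_iff_modEq, ← hω.eq_orderOf, Nat.modEq_iff_dvd,
    ← dvd_neg, neg_sub]

theorem Matrix.commute_diagonal_iff {ι R : Type*} [Fintype ι] [DecidableEq ι] [CommRing R]
    [NoZeroDivisors R] (d : ι → R) (M : Matrix ι ι R) :
    Commute (diagonal d) M ↔ ∀ i j, d i ≠ d j → M i j = 0 := by
  have entry (i j : ι) : d i * M i j = M i j * d j ↔ (d i ≠ d j → M i j = 0) := by
    rw [mul_comm (M i j), ← sub_eq_zero, ← sub_mul, mul_eq_zero, sub_eq_zero, or_iff_not_imp_left]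
  simp only [Commute, SemiconjBy, ← Matrix.ext_iff, diagonal_mul, mul_diagonal, entry]

theorem md_iff_commute_diagonal {n k : ℕ} {ω : ℂ} (hk : k ≠ 0) (hω : IsPrimitiveRoot ω k)
    (M : Matrix (Fin (n+1)) (Fin (n+1)) ℂ) :
    MD n k M ↔ Commute (diagonal fun i : Fin (n+1) => ω ^ (i : ℕ)) M := by
  simp only [MD, commute_diagonal_iff, ne_eq, hω.pow_eq_pow_iff_dvd_sub hk]

theorem KTridiagonal.md {n k : ℕ} {A : Matrix (Fin (n+1)) (Fin (n+1)) ℂ}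
    (hA : KTridiagonal n k A) : MD n k A := by
  intro i j hij
  refine hA i j (fun h0 => hij ?_) (fun hk => hij ?_)
  · rw [abs_eq_zero.mp h0]
    exact dvd_zero _
  · exact (dvd_abs _ _).mp (hk ▸ dvd_refl _)

theorem MD.inv {n k : ℕ} (hk : k ≠ 0) {A : Matrix (Fin (n+1)) (Fin (n+1)) ℂ} (hA : MD n k A) :
    MD n k A⁻¹ := by
  have hω := Complex.isPrimitiveRoot_exp k hk
  rw [md_iff_commute_diagonal hk hω] at hA ⊢
  simpa only [Matrix.zpow_neg_one] using Matrix.Commute.zpow_right hA (-1)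

theorem stmt4_general (n k : ℕ) (hk : 1 ≤ k)
    (A : Matrix (Fin (n+1)) (Fin (n+1)) ℂ)
    (hA : KTridiagonal n k A) :
    MD n k A⁻¹ :=
  hA.md.inv (by omega)

theorem stmt4 (n k : ℕ) (hk : 1 ≤ k) (hkn : k ≤ n)
    (A : Matrix (Fin (n+1)) (Fin (n+1)) ℂ)
    (hA : KTridiagonal n k A) (hU : IsUnit A) :
    MD n k A⁻¹ :=
  stmt4_general n k hk A hA
end

section
/- Let n, k be natural numbers with 1 ≤ k ≤ n and n+1 ≤ 2k. Let a_0,...,a_{n−k}, b_0,...,b_n, c_0,...,c_{n−k} be complex numbers and let A be the (n+1)×(n+1) k-tridiagonal matrix with A_{j+k,j} = a_j and A_{j,j+k} = c_j for j = 0,...,n−k, A_{jj} = b_j for j = 0,...,n, and all other entries zero. Then A is nonsingular (invertible) if and only if b_j ≠ 0 for every j with n+1−k ≤ j ≤ k−1 and b_j·b_{j+k} − a_j·c_j ≠ 0 for every j with 0 ≤ j ≤ n−k. -/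
/-!
Because `n + 1 ≤ 2 * k`, an index `i` is linked by a nonzero off-diagonal entry to at most one
other index, `i + k` or `i - k`. So up to a simultaneous permutation of rows and columns the matrix
is block diagonal, with `1 × 1` blocks `b i` for the indices `n + 1 - k ≤ i ≤ k - 1` and `2 × 2`
blocks `!![b j, c j; a j, b (j + k)]` for `j ≤ n - k`. Accordingly `A *ᵥ v = 0` splits into
independent systems on these blocks, and a nonzero solution exists iff some block is singular.
-/

open Matrix

def kTridiagonal {R : Type*} [Zero R] (n k : ℕ) (a b c : ℕ → R) :
    Matrix (Fin (n + 1)) (Fin (n + 1)) R :=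
  Matrix.of fun i j =>
    if (i : ℕ) = j then b i
    else if (i : ℕ) = j + k then a j
    else if (j : ℕ) = i + k then c i
    else 0

section TwoByTwo

variable {R : Type*} [CommRing R] [IsDomain R]

theorem eq_zero_of_mul_sub_mul_ne_zero {α β γ δ x y : R} (h : α * δ - β * γ ≠ 0)
    (h₁ : α * x + β * y = 0) (h₂ : γ * x + δ * y = 0) : x = 0 ∧ y = 0 := by
  refine ⟨(mul_eq_zero.1 ?_).resolve_left h, (mul_eq_zero.1 ?_).resolve_left h⟩
  · linear_combination δ * h₁ - β * h₂
  · linear_combination α * h₂ - γ * h₁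

theorem exists_ne_zero_of_mul_sub_mul_eq_zero {α β γ δ : R} (h : α * δ - β * γ = 0) :
    ∃ x y : R, (x ≠ 0 ∨ y ≠ 0) ∧ α * x + β * y = 0 ∧ γ * x + δ * y = 0 := by
  rw [← det_fin_two_of, ← exists_mulVec_eq_zero_iff] at h
  obtain ⟨v, hv0, hv⟩ := h
  refine ⟨v 0, v 1, ?_, by simpa [vecHead, vecTail] using congrFun hv 0,
    by simpa [vecHead, vecTail] using congrFun hv 1⟩
  by_contra! h
  exact hv0 (funext fun i => by fin_cases i <;> simp [h])

end TwoByTwo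

namespace kTridiagonal

theorem isolated_or_exists_pair {n k : ℕ} (i : Fin (n + 1)) :
    (n < i + k ∧ (i : ℕ) < k) ∨ (∃ q : Fin (n + 1), (q : ℕ) = i + k) ∨
      ∃ p : Fin (n + 1), (i : ℕ) = p + k := by
  by_cases hq : (i : ℕ) + k < n + 1
  · exact Or.inr (Or.inl ⟨⟨i + k, hq⟩, rfl⟩)
  by_cases hp : k ≤ (i : ℕ)
  · exact Or.inr (Or.inr ⟨⟨i - k, by omega⟩, by simp; omega⟩)
  · exact Or.inl ⟨by omega, by omega⟩

section Entries

variable {R : Type*} [Zero R] {n k : ℕ} {a b c : ℕ → R}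

@[simp]
theorem apply_self (i : Fin (n + 1)) : kTridiagonal n k a b c i i = b i := by
  simp [kTridiagonal]

theorem apply_of_eq_add (hk : 0 < k) {i j : Fin (n + 1)} (h : (i : ℕ) = j + k) :
    kTridiagonal n k a b c i j = a j := by
  rw [kTridiagonal, of_apply, if_neg (by omega), if_pos h]

theorem apply_of_add_eq (hk : 0 < k) {i j : Fin (n + 1)} (h : (j : ℕ) = i + k) :
    kTridiagonal n k a b c i j = c i := by
  rw [kTridiagonal, of_apply, if_neg (by omega), if_neg (by omega), if_pos h]

theorem apply_eq_zero {i j : Fin (n + 1)} (h₀ : (i : ℕ) ≠ j) (h₁ : (i : ℕ) ≠ j + k)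
    (h₂ : (j : ℕ) ≠ i + k) : kTridiagonal n k a b c i j = 0 := by
  simp [kTridiagonal, h₀, h₁, h₂]

end Entries

section MulVec

variable {R : Type*} [NonUnitalNonAssocSemiring R] {n k : ℕ} {a b c : ℕ → R}

theorem mulVec_apply_of_isolated {i : Fin (n + 1)}
    (hi : n < i + k) (hik : (i : ℕ) < k) (v : Fin (n + 1) → R) :
    (kTridiagonal n k a b c *ᵥ v) i = b i * v i := by
  rw [mulVec, dotProduct, Fintype.sum_eq_single i fun j hj => ?_, apply_self]
  rw [apply_eq_zero (fun h => hj (Fin.ext h.symm)) (by omega) (by omega), zero_mul]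

theorem mulVec_apply_of_pair_left (hk : 0 < k) (h2k : n + 1 ≤ 2 * k) {p q : Fin (n + 1)}
    (hpq : (q : ℕ) = p + k) (v : Fin (n + 1) → R) :
    (kTridiagonal n k a b c *ᵥ v) p = b p * v p + c p * v q := by
  have hne : p ≠ q := fun h => by simp [h] at hpq; omega
  rw [mulVec, dotProduct, Fintype.sum_eq_add p q hne fun j hj => ?_, apply_self,
    apply_of_add_eq hk hpq]
  rw [apply_eq_zero (fun h => hj.1 (Fin.ext h.symm)) (by omega)
    (fun h => hj.2 (Fin.ext (h.trans hpq.symm))), zero_mul]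

theorem mulVec_apply_of_pair_right (hk : 0 < k) (h2k : n + 1 ≤ 2 * k) {p q : Fin (n + 1)}
    (hpq : (q : ℕ) = p + k) (v : Fin (n + 1) → R) :
    (kTridiagonal n k a b c *ᵥ v) q = a p * v p + b q * v q := by
  have hne : p ≠ q := fun h => by simp [h] at hpq; omega
  have := q.isLt
  rw [mulVec, dotProduct, Fintype.sum_eq_add p q hne fun j hj => ?_, apply_self,
    apply_of_eq_add hk hpq]
  rw [apply_eq_zero (fun h => hj.2 (Fin.ext h.symm))
    (fun h => hj.1 (Fin.ext (by omega))) (by omega), zero_mul]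

theorem mulVec_eq_zero_iff (hk : 0 < k) (h2k : n + 1 ≤ 2 * k) (v : Fin (n + 1) → R) :
    kTridiagonal n k a b c *ᵥ v = 0 ↔
      (∀ i : Fin (n + 1), n < i + k → (i : ℕ) < k → b i * v i = 0) ∧
      ∀ p q : Fin (n + 1), (q : ℕ) = p + k →
        b p * v p + c p * v q = 0 ∧ a p * v p + b q * v q = 0 := by
  constructor
  · intro h
    refine ⟨fun i hi hik => ?_, fun p q hpq => ⟨?_, ?_⟩⟩
    · rw [← mulVec_apply_of_isolated hi hik, h, Pi.zero_apply]
    · rw [← mulVec_apply_of_pair_left hk h2k hpq, h, Pi.zero_apply]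
    · rw [← mulVec_apply_of_pair_right hk h2k hpq, h, Pi.zero_apply]
  · rintro ⟨hiso, hpair⟩
    funext i
    rcases isolated_or_exists_pair (k := k) i with ⟨hi, hik⟩ | ⟨q, hq⟩ | ⟨p, hp⟩
    · exact (mulVec_apply_of_isolated hi hik v).trans (hiso i hi hik)
    · exact (mulVec_apply_of_pair_left hk h2k hq v).trans (hpair i q hq).1
    · exact (mulVec_apply_of_pair_right hk h2k hp v).trans (hpair p i hp).2

end MulVec

section Determinant

variable {R : Type*} [CommRing R] {n k : ℕ} {a b c : ℕ → R}

theorem det_eq_zero_of_isolated {i : Fin (n + 1)} (hi : n < i + k) (hik : (i : ℕ) < k)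
    (hb : b i = 0) : (kTridiagonal n k a b c).det = 0 := by
  refine det_eq_zero_of_column_eq_zero i fun j => ?_
  by_cases hji : j = i
  · rw [hji, apply_self, hb]
  · exact apply_eq_zero (fun h => hji (Fin.ext h)) (by omega) (by omega)

theorem det_eq_zero_of_pair [IsDomain R] (hk : 0 < k) (h2k : n + 1 ≤ 2 * k) {p q : Fin (n + 1)}
    (hpq : (q : ℕ) = p + k) (h : b p * b q - a p * c p = 0) :
    (kTridiagonal n k a b c).det = 0 := by
  obtain ⟨x, y, hxy, h₁, h₂⟩ :=
    exists_ne_zero_of_mul_sub_mul_eq_zero (α := b p) (β := c p) (γ := a p) (δ := b q)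
      (by linear_combination h)
  have hne : p ≠ q := fun h => by simp [h] at hpq; omega
  set v : Fin (n + 1) → R := Pi.single p x + Pi.single q y
  have hvp : v p = x := by simp [v, hne]
  have hvq : v q = y := by simp [v, hne.symm]
  have hv : ∀ i, i ≠ p → i ≠ q → v i = 0 := fun i hip hiq => by simp [v, hip, hiq]
  refine exists_mulVec_eq_zero_iff.1 ⟨v, fun h0 => ?_, (mulVec_eq_zero_iff hk h2k v).2 ⟨?_, ?_⟩⟩
  · rcases hxy with hx | hy
    · exact hx (hvp ▸ congrFun h0 p)
    · exact hy (hvq ▸ congrFun h0 q)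
  · intro i hi hik
    rw [hv i (fun h => by subst h; omega) (fun h => by subst h; omega), mul_zero]
  · intro p' q' hpq'
    by_cases hp : p' = p
    · obtain rfl : q' = q := Fin.ext (by rw [hpq', hpq, hp])
      subst hp
      rw [hvp, hvq]
      exact ⟨h₁, h₂⟩
    · have hq : q' ≠ q := fun h => hp (Fin.ext (by subst h; omega))
      rw [hv p' hp (fun h => by subst h; omega), hv q' (fun h => by subst h; omega) hq]
      simp

theorem det_ne_zero_iff [IsDomain R] (hk : 0 < k) (hkn : k ≤ n) (h2k : n + 1 ≤ 2 * k) :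
    (kTridiagonal n k a b c).det ≠ 0 ↔
      (∀ j : ℕ, n + 1 - k ≤ j → j ≤ k - 1 → b j ≠ 0) ∧
      ∀ j : ℕ, j ≤ n - k → b j * b (j + k) - a j * c j ≠ 0 := by
  constructor
  · intro hdet
    refine ⟨fun j hj₁ hj₂ hb => hdet ?_, fun j hj h => hdet ?_⟩
    · exact det_eq_zero_of_isolated (i := ⟨j, by omega⟩) (by simp; omega) (by simp; omega) hb
    · exact det_eq_zero_of_pair hk h2k (p := ⟨j, by omega⟩) (q := ⟨j + k, by omega⟩) rfl h
  · rintro ⟨hiso, hpair⟩ hdet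
    obtain ⟨v, hv0, hv⟩ := exists_mulVec_eq_zero_iff.2 hdet
    obtain ⟨hviso, hvpair⟩ := (mulVec_eq_zero_iff hk h2k v).1 hv
    refine hv0 (funext fun i => ?_)
    rcases isolated_or_exists_pair (k := k) i with ⟨hi, hik⟩ | ⟨q, hq⟩ | ⟨p, hp⟩
    · exact (mul_eq_zero.1 (hviso i hi hik)).resolve_left (hiso i (by omega) (by omega))
    · have hdet₂ : b i * b q - c i * a i ≠ 0 := by
        rw [hq, mul_comm (c _)]; exact hpair i (by omega)
      exact (eq_zero_of_mul_sub_mul_ne_zero hdet₂ (hvpair i q hq).1 (hvpair i q hq).2).1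
    · have hdet₂ : b p * b i - c p * a p ≠ 0 := by
        rw [hp, mul_comm (c _)]; exact hpair p (by omega)
      exact (eq_zero_of_mul_sub_mul_ne_zero hdet₂ (hvpair p i hp).1 (hvpair p i hp).2).2

end Determinant

end kTridiagonal

theorem stmt6 (n k : ℕ) (hk : 1 ≤ k) (hkn : k ≤ n) (h2k : n + 1 ≤ 2 * k)
    (a b c : ℕ → ℂ)
    (A : Matrix (Fin (n+1)) (Fin (n+1)) ℂ)
    (hA : A = Matrix.of fun i j : Fin (n+1) =>
      if (i : ℕ) = (j : ℕ) then b i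
      else if (i : ℕ) = (j : ℕ) + k then a j
      else if (j : ℕ) = (i : ℕ) + k then c i
      else 0) :
    IsUnit A ↔
      ((∀ j : ℕ, n + 1 - k ≤ j → j ≤ k - 1 → b j ≠ 0) ∧
       (∀ j : ℕ, j ≤ n - k → b j * b (j + k) - a j * c j ≠ 0)) := by
  have hA' : A = kTridiagonal n k a b c := hA
  rw [hA', isUnit_iff_isUnit_det, isUnit_iff_ne_zero]
  exact kTridiagonal.det_ne_zero_iff hk hkn h2k
end
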